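/- Let t, n ≥ 1 and let R ⊆ {1,2}* be a regular language with stc(R) ≤ t. Let w ∈ (({1,2}* \ R) 0⁺)* (R \ {ε}) and set x = τ_r(w). Then for every word w' ∈ 1{0,1}*, sep(x 0^n w', x 0^{n+(2n+1)!} w') ≤ 2t + n + 4. -/

import Mathlib

open Computability

/-- `sep w x` : the minimum number of states of a DFA accepting `w` and rejecting `x`. -/
noncomputable def sep {α : Type} (w x : List α) : ℕ :=
  sInf {n | ∃ M : DFA α (Fin n), w ∈ M.accepts ∧ x ∉ M.accepts}

/-- `τ_r` : replaces `1` by `11` and `2` by `10` (fixing `0`). -/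
def tr (w : List (Fin 3)) : List (Fin 2) :=
  w.flatMap fun c => if c = 0 then [0] else if c = 1 then [1, 1] else [1, 0]

/-- The language `0⁺` of nonempty blocks of zeros. -/
def zeroPlus : Language (Fin 3) := {w | ∃ i, 1 ≤ i ∧ w = List.replicate i 0}

/-- `{1,2}* \ R`. -/
def notR (R : Language (Fin 3)) : Language (Fin 3) :=
  {u | (∀ c ∈ u, c = 1 ∨ c = 2) ∧ u ∉ R}

/-- `R \ {ε}`. -/
def Rne (R : Language (Fin 3)) : Language (Fin 3) := {u | u ∈ R ∧ u ≠ []}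

/-! ### Auxiliary machinery -/

/-- Pad a DFA on a fintype into one on `Fin B` to bound `sep`. -/
lemma sep_le_of_dfa {α : Type} {σ : Type} [Fintype σ] {B : ℕ} (hB : Fintype.card σ ≤ B)
    (N : DFA α σ) (w x : List α) (hw : w ∈ N.accepts) (hx : x ∉ N.accepts) :
    sep w x ≤ B := by
  classical
  obtain ⟨f⟩ : Nonempty (σ ↪ Fin B) :=
    Function.Embedding.nonempty_of_card_le (by simpa using hB)
  let M : DFA α (Fin B) :=
    { step := fun s a => if h : ∃ q, f q = s then f (N.step h.choose a) else s
      start := f N.start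
      accept := f '' N.accept }
  have key : ∀ (l : List α) (q : σ), M.evalFrom (f q) l = f (N.evalFrom q l) := by
    intro l
    induction l with
    | nil => intro q; rfl
    | cons a l ih =>
      intro q
      have h : ∃ q', f q' = f q := ⟨q, rfl⟩
      have hq : h.choose = q := f.injective h.choose_spec
      have hstep : M.step (f q) a = f (N.step q a) := by
        simp only [M, dif_pos h, hq]
      rw [DFA.evalFrom, List.foldl_cons, ← DFA.evalFrom]
      rw [hstep, ih]
      rfl
  have hacc : ∀ l : List α, (l ∈ M.accepts ↔ l ∈ N.accepts) := by
    intro l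
    rw [DFA.mem_accepts, DFA.mem_accepts]
    show M.evalFrom M.start l ∈ M.accept ↔ _
    have : M.start = f N.start := rfl
    rw [this, key]
    constructor
    · rintro ⟨q, hq, heq⟩
      rwa [f.injective heq] at hq
    · intro h; exact ⟨_, h, rfl⟩
  apply Nat.sInf_le
  exact ⟨M, (hacc w).mpr hw, fun h => hx ((hacc x).mp h)⟩

section machine

variable {m : ℕ} (M : DFA (Fin 3) (Fin m)) (n : ℕ)

/-- State space: M-states × mid-pair flag, a "between blocks" state `Z`,
and `n+2` counting states (`0..n-1` counting, `n` = accept sink, `n+1` = dead). -/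
abbrev St (m n : ℕ) := (Fin m × Bool) ⊕ (Unit ⊕ Fin (n + 2))

open scoped Classical in
noncomputable def nstep : St m n → Fin 2 → St m n
  | Sum.inl (q, false), a =>
      if a = 0 then
        if q ∈ M.accept then Sum.inr (Sum.inr ⟨0, by omega⟩) else Sum.inr (Sum.inl ())
      else Sum.inl (q, true)
  | Sum.inl (q, true), a => Sum.inl (M.step q (if a = 1 then 1 else 2), false)
  | Sum.inr (Sum.inl ()), a =>
      if a = 0 then Sum.inr (Sum.inl ()) else Sum.inl (M.start, true)
  | Sum.inr (Sum.inr j), a =>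
      if a = 0 then
        if h : j.val + 1 < n then Sum.inr (Sum.inr ⟨j.val + 1, by omega⟩)
        else if j.val = n then Sum.inr (Sum.inr ⟨n, by omega⟩)
        else Sum.inr (Sum.inr ⟨n + 1, by omega⟩)
      else
        if j.val = n - 1 ∨ j.val = n then Sum.inr (Sum.inr ⟨n, by omega⟩)
        else Sum.inr (Sum.inr ⟨n + 1, by omega⟩)

noncomputable def NDFA : DFA (Fin 2) (St m n) :=
  { step := nstep M n
    start := Sum.inl (M.start, false)
    accept := {Sum.inr (Sum.inr ⟨n, by omega⟩)} }

end machine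


section lemmas

variable {m : ℕ} (M : DFA (Fin 3) (Fin m)) (n : ℕ)

lemma evalFrom_cons {α σ : Type*} (N : DFA α σ) (s : σ) (a : α) (l : List α) :
    N.evalFrom s (a :: l) = N.evalFrom (N.step s a) l := rfl

lemma stepA1 (q : Fin m) :
    (NDFA M n).step (Sum.inl (q, false)) 1 = Sum.inl (q, true) := by
  simp [NDFA, nstep]

lemma stepA0acc (q : Fin m) (h : q ∈ M.accept) :
    (NDFA M n).step (Sum.inl (q, false)) 0 = Sum.inr (Sum.inr ⟨0, by omega⟩) := by
  simp [NDFA, nstep, h]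

lemma stepA0nacc (q : Fin m) (h : q ∉ M.accept) :
    (NDFA M n).step (Sum.inl (q, false)) 0 = Sum.inr (Sum.inl ()) := by
  simp [NDFA, nstep, h]

lemma stepB (q : Fin m) (a : Fin 2) :
    (NDFA M n).step (Sum.inl (q, true)) a
      = Sum.inl (M.step q (if a = 1 then 1 else 2), false) := by
  simp [NDFA, nstep]

lemma stepZ0 : (NDFA M n).step (Sum.inr (Sum.inl ())) 0 = Sum.inr (Sum.inl ()) := by
  simp [NDFA, nstep]

lemma stepZ1 : (NDFA M n).step (Sum.inr (Sum.inl ())) 1 = Sum.inl (M.start, true) := by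
  simp [NDFA, nstep]

lemma tr_append (u v : List (Fin 3)) : tr (u ++ v) = tr u ++ tr v := by
  simp [tr]

lemma tr_zeros (k : ℕ) : tr (List.replicate k 0) = List.replicate k 0 := by
  induction k with
  | zero => rfl
  | succ k ih => simp [List.replicate_succ, tr] at ih ⊢; simpa [tr] using ih

lemma trEval (u : List (Fin 3)) (hu : ∀ c ∈ u, c = 1 ∨ c = 2) (q : Fin m) :
    (NDFA M n).evalFrom (Sum.inl (q, false)) (tr u)
      = Sum.inl (M.evalFrom q u, false) := by
  induction u generalizing q with
  | nil => rfl
  | cons c u ih =>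
    rcases hu c List.mem_cons_self with hc | hc <;> subst hc
    · have h1 : tr (1 :: u) = 1 :: 1 :: tr u := by simp [tr]
      rw [h1, evalFrom_cons, stepA1, evalFrom_cons, stepB]
      have : M.evalFrom q (1 :: u) = M.evalFrom (M.step q 1) u := rfl
      rw [this, ← ih (fun c hc => hu c (List.mem_cons_of_mem _ hc)) (M.step q 1)]
      norm_num
    · have h1 : tr (2 :: u) = 1 :: 0 :: tr u := by simp [tr]
      rw [h1, evalFrom_cons, stepA1, evalFrom_cons, stepB]
      have : M.evalFrom q (2 :: u) = M.evalFrom (M.step q 2) u := rfl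
      rw [this, ← ih (fun c hc => hu c (List.mem_cons_of_mem _ hc)) (M.step q 2)]
      norm_num

lemma zerosZ (k : ℕ) :
    (NDFA M n).evalFrom (Sum.inr (Sum.inl ())) (List.replicate k 0)
      = Sum.inr (Sum.inl ()) := by
  induction k with
  | zero => rfl
  | succ k ih => rw [List.replicate_succ, evalFrom_cons, stepZ0, ih]

lemma zerosNacc (q : Fin m) (h : q ∉ M.accept) (k : ℕ) (hk : 1 ≤ k) :
    (NDFA M n).evalFrom (Sum.inl (q, false)) (List.replicate k 0)
      = Sum.inr (Sum.inl ()) := by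
  obtain ⟨k, rfl⟩ : ∃ k', k = k' + 1 := ⟨k - 1, by omega⟩
  rw [List.replicate_succ, evalFrom_cons, stepA0nacc M n q h, zerosZ]

/-- "Good" states behave like the start on encoded nonempty `{1,2}`-words. -/
def good (s : St m n) : Prop :=
  s = Sum.inl (M.start, false) ∨ s = Sum.inr (Sum.inl ())

lemma fromGood (s : St m n) (hs : good M n s) (u : List (Fin 3))
    (hu : ∀ c ∈ u, c = 1 ∨ c = 2) (hne : u ≠ []) :
    (NDFA M n).evalFrom s (tr u) = Sum.inl (M.evalFrom M.start u, false) := by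
  rcases hs with rfl | rfl
  · exact trEval M n u hu M.start
  · obtain ⟨c, u', rfl⟩ : ∃ c u', u = c :: u' := by
      cases u with
      | nil => exact absurd rfl hne
      | cons c u' => exact ⟨c, u', rfl⟩
    rcases hu c List.mem_cons_self with hc | hc <;> subst hc
    · have h1 : tr (1 :: u') = 1 :: 1 :: tr u' := by simp [tr]
      rw [h1, evalFrom_cons, stepZ1, evalFrom_cons, stepB]
      have : M.evalFrom M.start (1 :: u') = M.evalFrom (M.step M.start 1) u' := rfl
      rw [this, ← trEval M n u' (fun c hc => hu c (List.mem_cons_of_mem _ hc))]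
      norm_num
    · have h1 : tr (2 :: u') = 1 :: 0 :: tr u' := by simp [tr]
      rw [h1, evalFrom_cons, stepZ1, evalFrom_cons, stepB]
      have : M.evalFrom M.start (2 :: u') = M.evalFrom (M.step M.start 2) u' := rfl
      rw [this, ← trEval M n u' (fun c hc => hu c (List.mem_cons_of_mem _ hc))]
      norm_num

lemma piece (R : Language (Fin 3)) (hMR : M.accepts = R)
    (s : St m n) (hs : good M n s) (p : List (Fin 3)) (hp : p ∈ notR R * zeroPlus) :
    (NDFA M n).evalFrom s (tr p) = Sum.inr (Sum.inl ()) := by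
  obtain ⟨a, ha, z, ⟨k, hk, rfl⟩, rfl⟩ := Language.mem_mul.mp hp
  rw [tr_append, DFA.evalFrom_of_append, tr_zeros]
  rcases eq_or_ne a [] with rfl | hane
  · have hstart : M.start ∉ M.accept := by
      intro h
      exact ha.2 (hMR ▸ (DFA.mem_accepts M).mpr h)
    rcases hs with rfl | rfl
    · exact zerosNacc M n M.start hstart k hk
    · exact zerosZ M n k
  · rw [fromGood M n s hs a ha.1 hane]
    apply zerosNacc M n _ _ k hk
    intro h
    exact ha.2 (hMR ▸ (DFA.mem_accepts M).mpr h)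

lemma starRun (R : Language (Fin 3)) (hMR : M.accepts = R)
    (L : List (List (Fin 3))) (hL : ∀ p ∈ L, p ∈ notR R * zeroPlus)
    (s : St m n) (hs : good M n s) :
    good M n ((NDFA M n).evalFrom s (tr L.flatten)) := by
  induction L generalizing s with
  | nil => exact hs
  | cons p L ih =>
    rw [List.flatten_cons, tr_append, DFA.evalFrom_of_append,
      piece M n R hMR s hs p (hL p List.mem_cons_self)]
    exact ih (fun q hq => hL q (List.mem_cons_of_mem _ hq)) _ (Or.inr rfl)

lemma countRun (k : ℕ) : ∀ j : ℕ, ∀ h : j + k + 1 ≤ n,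
    (NDFA M n).evalFrom (Sum.inr (Sum.inr ⟨j, by omega⟩)) (List.replicate k 0)
      = Sum.inr (Sum.inr ⟨j + k, by omega⟩) := by
  induction k with
  | zero => intro j h; rfl
  | succ k ih =>
    intro j h
    rw [List.replicate_succ, evalFrom_cons]
    have hstep : (NDFA M n).step (Sum.inr (Sum.inr ⟨j, by omega⟩)) 0
        = Sum.inr (Sum.inr ⟨j + 1, by omega⟩) := by
      have hj : j + 1 < n := by omega
      simp [NDFA, nstep, hj]
    rw [hstep]
    have := ih (j + 1) (by omega)
    rw [this]
    simp only [Sum.inr.injEq, Fin.mk.injEq]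
    omega

lemma accSink (l : List (Fin 2)) :
    (NDFA M n).evalFrom (Sum.inr (Sum.inr ⟨n, by omega⟩)) l
      = Sum.inr (Sum.inr ⟨n, by omega⟩) := by
  induction l with
  | nil => rfl
  | cons a l ih =>
    rw [evalFrom_cons]
    have hstep : (NDFA M n).step (Sum.inr (Sum.inr ⟨n, by omega⟩)) a
        = Sum.inr (Sum.inr ⟨n, by omega⟩) := by
      rcases eq_or_ne a 0 with rfl | ha
      · simp [NDFA, nstep]
      · simp [NDFA, nstep, ha]
    rw [hstep, ih]

lemma deadSink (l : List (Fin 2)) :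
    (NDFA M n).evalFrom (Sum.inr (Sum.inr ⟨n + 1, by omega⟩)) l
      = Sum.inr (Sum.inr ⟨n + 1, by omega⟩) := by
  induction l with
  | nil => rfl
  | cons a l ih =>
    rw [evalFrom_cons]
    have hstep : (NDFA M n).step (Sum.inr (Sum.inr ⟨n + 1, by omega⟩)) a
        = Sum.inr (Sum.inr ⟨n + 1, by omega⟩) := by
      have h2 : ¬(n + 1 = n - 1) := by omega
      have h3 : ¬(n + 1 = n) := by omega
      rcases eq_or_ne a 0 with rfl | ha
      · simp [NDFA, nstep]; omega
      · simp [NDFA, nstep, ha, h2, h3]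
    rw [hstep, ih]

end lemmas

theorem stmt_18 (t n : ℕ) (ht : 1 ≤ t) (hn : 1 ≤ n) (R : Language (Fin 3))
    (hR12 : ∀ u ∈ R, ∀ c ∈ u, c = 1 ∨ c = 2)
    (hstc : ∃ m ≤ t, ∃ M : DFA (Fin 3) (Fin m), M.accepts = R)
    (w : List (Fin 3)) (hw : w ∈ (notR R * zeroPlus)∗ * Rne R)
    (w' : List (Fin 2)) (hw' : ∃ u, w' = 1 :: u) :
    sep (tr w ++ List.replicate n 0 ++ w')
        (tr w ++ List.replicate (n + Nat.factorial (2 * n + 1)) 0 ++ w') ≤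
      2 * t + n + 4 := by
  classical
  obtain ⟨m, hm, M, hMR⟩ := hstc
  obtain ⟨v, hv, u, hu, rfl⟩ := Language.mem_mul.mp hw
  obtain ⟨L, rfl, hL⟩ := Language.mem_kstar.mp hv
  obtain ⟨w'', rfl⟩ := hw'
  obtain ⟨n', rfl⟩ : ∃ n', n = n' + 1 := ⟨n - 1, by omega⟩
  set N := NDFA M (n' + 1) with hNdef
  have hgood : good M (n' + 1) (N.evalFrom N.start (tr L.flatten)) :=
    starRun M (n' + 1) R hMR L hL _ (Or.inl rfl)
  have hu1 : ∀ c ∈ u, c = 1 ∨ c = 2 := hR12 u hu.1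
  have hx : N.evalFrom N.start (tr (L.flatten ++ u))
      = Sum.inl (M.evalFrom M.start u, false) := by
    rw [tr_append, DFA.evalFrom_of_append, fromGood M (n' + 1) _ hgood u hu1 hu.2]
  have hqf : M.evalFrom M.start u ∈ M.accept := by
    have : u ∈ M.accepts := hMR ▸ hu.1
    exact (DFA.mem_accepts M).mp this
  have hzn : N.evalFrom (Sum.inl (M.evalFrom M.start u, false))
      (List.replicate (n' + 1) 0) = Sum.inr (Sum.inr ⟨n', by omega⟩) := by
    rw [List.replicate_succ, evalFrom_cons, hNdef, stepA0acc M (n' + 1) _ hqf]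
    have := countRun M (n' + 1) n' 0 (by omega)
    simpa using this
  have hstep1 : N.step (Sum.inr (Sum.inr ⟨n', by omega⟩)) 1
      = Sum.inr (Sum.inr ⟨n' + 1, by omega⟩) := by
    have hcond : n' = n' + 1 - 1 ∨ n' = n' + 1 := Or.inl (by omega)
    simp [hNdef, NDFA, nstep, hcond]
  have hstep0 : N.step (Sum.inr (Sum.inr ⟨n', by omega⟩)) 0
      = Sum.inr (Sum.inr ⟨n' + 1 + 1, by omega⟩) := by
    have h1 : ¬(n' + 1 < n' + 1) := by omega
    have h2 : ¬(n' = n' + 1) := by omega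
    simp [hNdef, NDFA, nstep, h1, h2]
  have haccmem : (Sum.inr (Sum.inr ⟨n' + 1, by omega⟩) : St m (n' + 1)) ∈ N.accept := rfl
  -- the first word is accepted
  have hacc1 : tr (L.flatten ++ u) ++ List.replicate (n' + 1) 0 ++ (1 :: w'')
      ∈ N.accepts := by
    rw [DFA.mem_accepts]
    show N.evalFrom N.start _ ∈ N.accept
    rw [DFA.evalFrom_of_append, DFA.evalFrom_of_append, hx, hzn, evalFrom_cons, hstep1,
      hNdef, accSink]
    exact haccmem
  -- the second word is rejected
  have hrej2 : tr (L.flatten ++ u)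
      ++ List.replicate ((n' + 1) + Nat.factorial (2 * (n' + 1) + 1)) 0 ++ (1 :: w'')
      ∉ N.accepts := by
    rw [DFA.mem_accepts]
    show ¬ (N.evalFrom N.start _ ∈ N.accept)
    obtain ⟨K, hK⟩ : ∃ K, Nat.factorial (2 * (n' + 1) + 1) = K + 1 :=
      ⟨Nat.factorial (2 * (n' + 1) + 1) - 1, by
        have := Nat.factorial_pos (2 * (n' + 1) + 1); omega⟩
    have hsplit : List.replicate ((n' + 1) + Nat.factorial (2 * (n' + 1) + 1)) (0 : Fin 2)
        = List.replicate (n' + 1) 0 ++ (List.replicate K 0 ++ [0]) := by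
      rw [← List.replicate_succ', ← List.replicate_add, hK]
    have hdead : ∀ k, N.evalFrom (Sum.inr (Sum.inr ⟨n', by omega⟩))
        (List.replicate k 0 ++ [0]) = Sum.inr (Sum.inr ⟨n' + 1 + 1, by omega⟩) := by
      intro k
      induction k with
      | zero =>
        show N.evalFrom _ [0] = _
        rw [evalFrom_cons, hstep0]
        rfl
      | succ k ih =>
        rw [List.replicate_succ, List.cons_append, evalFrom_cons, hstep0, hNdef,
          deadSink]
    rw [hsplit, DFA.evalFrom_of_append, DFA.evalFrom_of_append, hx,
      DFA.evalFrom_of_append, hzn, hdead K, evalFrom_cons]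
    have hstepD : N.step (Sum.inr (Sum.inr ⟨n' + 1 + 1, by omega⟩)) 1
        = Sum.inr (Sum.inr ⟨n' + 1 + 1, by omega⟩) := by
      have h2 : ¬(n' + 1 + 1 = n' + 1 - 1) := by omega
      have h3 : ¬(n' + 1 + 1 = n' + 1) := by omega
      have h4 : ¬(n' + 1 + 1 = n') := by omega
      simp [hNdef, NDFA, nstep, h2, h3, h4]
    rw [hstepD, hNdef, deadSink]
    intro hmem
    have : n' + 1 + 1 = n' + 1 := by
      have h := Set.mem_singleton_iff.mp hmem
      simp [Fin.ext_iff] at h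
    omega
  have hcard : Fintype.card (St m (n' + 1)) ≤ 2 * t + (n' + 1) + 4 := by
    simp only [St, Fintype.card_sum, Fintype.card_prod, Fintype.card_fin,
      Fintype.card_bool, Fintype.card_unit]
    omega
  exact sep_le_of_dfa hcard N _ _ hacc1 hrej2
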